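/- For the Cantor ternary set C, the sumset C + C = {x + y : x, y ∈ C} equals the full interval [0, 2]. -/
import Mathlib


/-- The `n`-th stage of the Cantor construction with ratio `r`:
`C_0 = [0,1]`, `C_{n+1} = f₀(C_n) ∪ f₁(C_n)` with `f₀ x = r x`, `f₁ x = r x + (1-r)`. -/
def preCantorR (r : ℝ) : ℕ → Set ℝ
  | 0 => Set.Icc 0 1
  | n + 1 =>
      (fun x => r * x) '' preCantorR r n ∪ (fun x => r * x + (1 - r)) '' preCantorR r n

/-- The generalized Cantor set with contraction ratio `r`. -/
def cantorSetR (r : ℝ) : Set ℝ := ⋂ n, preCantorR r n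

/-- The classical Cantor ternary set. -/
def cantorTernary : Set ℝ := cantorSetR (1/3)

lemma preCantor_subset_Icc (n : ℕ) : preCantorR (1/3) n ⊆ Set.Icc 0 1 := by
  induction n with
  | zero => exact subset_rfl
  | succ n ih =>
    rintro x (⟨y, hy, rfl⟩ | ⟨y, hy, rfl⟩) <;>
      · obtain ⟨h0, h1⟩ := ih hy
        constructor <;> simp <;> nlinarith

lemma preCantor_antitone : ∀ n, preCantorR (1/3) (n+1) ⊆ preCantorR (1/3) n := by
  intro n
  induction n with
  | zero =>
    intro x hx
    exact preCantor_subset_Icc 1 hx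
  | succ n ih =>
    rintro x (⟨y, hy, rfl⟩ | ⟨y, hy, rfl⟩)
    · exact Or.inl ⟨y, ih hy, rfl⟩
    · exact Or.inr ⟨y, ih hy, rfl⟩

lemma preCantor_compact (n : ℕ) : IsCompact (preCantorR (1/3) n) := by
  induction n with
  | zero => exact isCompact_Icc
  | succ n ih =>
    exact ((ih.image (by continuity)).union (ih.image (by continuity)))

lemma preCantor_sum (n : ℕ) : ∀ z ∈ Set.Icc (0:ℝ) 2,
    ∃ x ∈ preCantorR (1/3) n, ∃ y ∈ preCantorR (1/3) n, x + y = z := by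
  induction n with
  | zero =>
    rintro z ⟨h0, h2⟩
    exact ⟨z/2, ⟨by linarith, by linarith⟩, z/2, ⟨by linarith, by linarith⟩, by ring⟩
  | succ n ih =>
    rintro z ⟨h0, h2⟩
    rcases le_or_gt z (2/3) with h | h
    · obtain ⟨x, hx, y, hy, hxy⟩ := ih (3*z) ⟨by linarith, by linarith⟩
      refine ⟨(1/3)*x, Or.inl ⟨x, hx, rfl⟩, (1/3)*y, Or.inl ⟨y, hy, rfl⟩, by linarith⟩
    rcases le_or_gt z (4/3) with h' | h'
    · obtain ⟨x, hx, y, hy, hxy⟩ := ih (3*z - 2) ⟨by linarith, by linarith⟩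
      exact ⟨(1/3)*x, Or.inl ⟨x, hx, rfl⟩, (1/3)*y + (1 - 1/3), Or.inr ⟨y, hy, rfl⟩,
        by linarith⟩
    · obtain ⟨x, hx, y, hy, hxy⟩ := ih (3*z - 4) ⟨by linarith, by linarith⟩
      exact ⟨(1/3)*x + (1 - 1/3), Or.inr ⟨x, hx, rfl⟩, (1/3)*y + (1 - 1/3), Or.inr ⟨y, hy, rfl⟩,
        by linarith⟩

/-- Steinhaus: the sumset of the Cantor ternary set with itself is `[0,2]`. -/
theorem stmt_0 :
    {z : ℝ | ∃ x ∈ cantorTernary, ∃ y ∈ cantorTernary, z = x + y} = Set.Icc 0 2 := by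
  ext z
  constructor
  · rintro ⟨x, hx, y, hy, rfl⟩
    have hx0 : x ∈ Set.Icc (0:ℝ) 1 := preCantor_subset_Icc 0 (Set.mem_iInter.1 hx 0)
    have hy0 : y ∈ Set.Icc (0:ℝ) 1 := preCantor_subset_Icc 0 (Set.mem_iInter.1 hy 0)
    exact ⟨by linarith [hx0.1, hy0.1], by linarith [hx0.2, hy0.2]⟩
  · intro hz
    set K : ℕ → Set (ℝ × ℝ) := fun n =>
      (preCantorR (1/3) n ×ˢ preCantorR (1/3) n) ∩ {p : ℝ × ℝ | p.1 + p.2 = z} with hK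
    have hKc : ∀ n, IsCompact (K n) := fun n =>
      ((preCantor_compact n).prod (preCantor_compact n)).inter_right
        (isClosed_eq (by continuity) continuous_const)
    have hKne : ∀ n, (K n).Nonempty := by
      intro n
      obtain ⟨x, hx, y, hy, hxy⟩ := preCantor_sum n z hz
      exact ⟨(x, y), ⟨hx, hy⟩, hxy⟩
    have hKmono : ∀ n, K (n+1) ⊆ K n := by
      rintro n ⟨x, y⟩ ⟨⟨hx, hy⟩, hs⟩
      exact ⟨⟨preCantor_antitone n hx, preCantor_antitone n hy⟩, hs⟩
    obtain ⟨⟨x, y⟩, hp⟩ := IsCompact.nonempty_iInter_of_sequence_nonempty_isCompact_isClosed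
      K hKmono hKne (hKc 0) (fun n => (hKc n).isClosed)
    have hmem : ∀ n, (x, y) ∈ K n := Set.mem_iInter.1 hp
    refine ⟨x, Set.mem_iInter.2 (fun n => ((hmem n).1).1),
      y, Set.mem_iInter.2 (fun n => ((hmem n).1).2), ((hmem 0).2).symm⟩
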